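/- arXiv:0906.1780 — 2 statements merged into one kernel-verified Lean document; each statement's English description precedes it below -/
import Mathlib

section
/- For any p ∈ OFS, f(p) ≥ fw(p). -/
/-- `OFS p`: `p` is a strictly increasing nonempty finite sequence of positive integers. -/
def OFS (p : List ℕ) : Prop := p ≠ [] ∧ p.Pairwise (· < ·) ∧ ∀ x ∈ p, 0 < x

/-- The reduction operation `R`. -/
def R : List ℕ → List ℕ
  | [] => []
  | [a] => [a]
  | a :: b :: rest => (((b :: rest).map (fun x => x - a)).insert a).mergeSort (· ≤ ·)

/-- `max(p)` -/
def maxL (p : List ℕ) : ℕ := p.foldr max 0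

/-- `gcd(p)` -/
def gcdL (p : List ℕ) : ℕ := p.foldr Nat.gcd 0

/-- Fuel-based auxiliary for `f`; `maxL p + 1` fuel always suffices since
`maxL` strictly decreases under `R` for lists of length `> 1`. -/
def faux : ℕ → List ℕ → ℕ
  | _, [] => 0
  | _, [a] => a
  | 0, _ => 0
  | fuel+1, p => p.headI + faux fuel (R p)

/-- The function `f` of Castelli–Mignosi–Restivo: `f p = p₁` if `|p| = 1`,
and `f p = p₁ + f (R p)` otherwise. -/
def f (p : List ℕ) : ℕ := faux (maxL p + 1) p

/-- The function `fw` of Tijdeman–Zamboni. -/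
def fw (p : List ℕ) : ℕ :=
  if h : 1 < p.length ∧ gcdL p.dropLast = gcdL p ∧ f p.dropLast ≤ maxL p
  then fw p.dropLast
  else f p
termination_by p.length
decreasing_by
  simp only [List.length_dropLast]
  omega

/-- The Fine–Wilf graph `G(p,k)` on vertex set `{1,…,k}` (represented by `Fin k`,
with `v : Fin k` standing for the integer `v+1`); `i` and `j` are adjacent iff
`|i - j|` is an entry of `p`. -/
def G (p : List ℕ) (k : ℕ) : SimpleGraph (Fin k) where
  Adj i j := i ≠ j ∧ (((j : ℕ) - (i : ℕ)) ∈ p ∨ ((i : ℕ) - (j : ℕ)) ∈ p)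
  symm := by
    constructor
    intro i j h
    exact ⟨h.1.symm, h.2.symm⟩
  loopless := by
    constructor
    intro i h
    exact h.1 rfl

/-- `p` is trim. -/
def Trim (p : List ℕ) : Prop :=
  p.length = 1 ∨ (1 < p.length ∧
    (gcdL p ≠ gcdL p.dropLast ∨ (gcdL p = gcdL p.dropLast ∧ maxL p < f p.dropLast)))

lemma le_maxL {x : ℕ} {p : List ℕ} (h : x ∈ p) : x ≤ maxL p := by
  induction p with
  | nil => simp at h
  | cons a t ih =>
    rcases List.mem_cons.1 h with rfl | h
    · exact le_max_left _ _
    · exact le_trans (ih h) (le_max_right _ _)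

lemma maxL_lt {p : List ℕ} {M : ℕ} (hM : 0 < M) (h : ∀ x ∈ p, x < M) : maxL p < M := by
  induction p with
  | nil => exact hM
  | cons a t ih =>
    have : max a (maxL t) < M :=
      max_lt (h a (List.mem_cons_self)) (ih fun x hx => h x (List.mem_cons_of_mem _ hx))
    exact this

lemma maxL_mem {p : List ℕ} (hne : p ≠ []) : maxL p ∈ p := by
  induction p with
  | nil => exact absurd rfl hne
  | cons a t ih =>
    rcases eq_or_ne t [] with rfl | ht
    · simp [maxL]
    · have : maxL (a :: t) = max a (maxL t) := rfl
      rcases le_total (maxL t) a with hle | hle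
      · rw [this, max_eq_left hle]; exact List.mem_cons_self
      · rw [this, max_eq_right hle]; exact List.mem_cons_of_mem _ (ih ht)

section RLemmas

variable {a b : ℕ} {rest : List ℕ} (h : OFS (a :: b :: rest))

lemma mem_R_iff {x : ℕ} :
    x ∈ R (a :: b :: rest) ↔ x ∈ List.insert a ((b :: rest).map (fun y => y - a)) :=
  (List.mergeSort_perm _ _).mem_iff

include h

lemma a_lt : ∀ y ∈ b :: rest, a < y := fun _ hy => List.rel_of_pairwise_cons h.2.1 hy

lemma OFS_R : OFS (R (a :: b :: rest)) := by
  have ha : a ∈ R (a :: b :: rest) := mem_R_iff.2 (List.mem_insert_self)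
  refine ⟨fun hnil => by simp [hnil] at ha, ?_, ?_⟩
  · have hpw : (b :: rest).Pairwise (· < ·) := (List.pairwise_cons.1 h.2.1).2
    have hnd : ((b :: rest).map (fun y => y - a)).Nodup := by
      rw [List.nodup_map_iff_inj_on (List.Pairwise.nodup hpw)]
      intro x hx y hy hxy
      have hax := a_lt h x hx
      have hay := a_lt h y hy
      omega
    have hnd' : (List.insert a ((b :: rest).map (fun y => y - a))).Nodup := hnd.insert
    have hnd'' : (R (a :: b :: rest)).Nodup := ((List.mergeSort_perm _ _).nodup_iff).2 hnd'
    exact List.Pairwise.imp₂ (fun _ _ h1 h2 => lt_of_le_of_ne h1 h2) (List.pairwise_mergeSort' (· ≤ ·) _) hnd''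
  · intro x hx
    rcases List.mem_insert_iff.1 (mem_R_iff.1 hx) with rfl | hx'
    · exact h.2.2 _ (List.mem_cons_self)
    · obtain ⟨y, hy, rfl⟩ := List.mem_map.1 hx'
      have := a_lt h y hy
      omega

lemma maxL_R_lt : maxL (R (a :: b :: rest)) < maxL (a :: b :: rest) := by
  have hb : b ≤ maxL (a :: b :: rest) := le_maxL (by simp)
  have hab : a < b := a_lt h b (List.mem_cons_self)
  have hbpos : 0 < b := h.2.2 b (by simp)
  refine maxL_lt (by omega) ?_
  intro x hx
  rcases List.mem_insert_iff.1 (mem_R_iff.1 hx) with rfl | hx'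
  · omega
  · obtain ⟨y, hy, rfl⟩ := List.mem_map.1 hx'
    have h1 := a_lt h y hy
    have h2 : y ≤ maxL (a :: b :: rest) := le_maxL (List.mem_cons_of_mem _ hy)
    have h3 : 0 < a := h.2.2 a (by simp)
    omega

lemma maxL_sub_le : maxL (a :: b :: rest) - a ≤ maxL (R (a :: b :: rest)) := by
  have hm : maxL (a :: b :: rest) ∈ a :: b :: rest := maxL_mem (by simp)
  have hb : b ≤ maxL (a :: b :: rest) := le_maxL (by simp)
  have hab : a < b := a_lt h b (List.mem_cons_self)
  have hm' : maxL (a :: b :: rest) ∈ b :: rest := by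
    rcases List.mem_cons.1 hm with heq | h'
    · omega
    · exact h'
  apply le_maxL
  exact mem_R_iff.2 (List.mem_insert_iff.2 (Or.inr (List.mem_map.2 ⟨_, hm', rfl⟩)))

end RLemmas

lemma faux_nil (m : ℕ) : faux m [] = 0 := by cases m <;> rfl

lemma faux_singleton (m x : ℕ) : faux m [x] = x := by cases m <;> rfl

lemma faux_congr : ∀ k p, OFS p → maxL p ≤ k → ∀ m n, maxL p < m → maxL p < n →
    faux m p = faux n p := by
  intro k
  induction k with
  | zero =>
    intro p hp hk m n _ _
    match p with
    | [] => exact absurd rfl hp.1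
    | [x] => rw [faux_singleton, faux_singleton]
    | a :: b :: rest =>
      have := hp.2.2 b (by simp)
      have : b ≤ maxL (a :: b :: rest) := le_maxL (by simp)
      omega
  | succ k ih =>
    intro p hp hk m n hm hn
    match p with
    | [] => rw [faux_nil, faux_nil]
    | [x] => rw [faux_singleton, faux_singleton]
    | a :: b :: rest =>
      obtain ⟨m', rfl⟩ : ∃ m', m = m' + 1 := ⟨m - 1, by omega⟩
      obtain ⟨n', rfl⟩ : ∃ n', n = n' + 1 := ⟨n - 1, by omega⟩
      show a + faux m' (R (a :: b :: rest)) = a + faux n' (R (a :: b :: rest))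
      have hlt := maxL_R_lt hp
      have := ih (R (a :: b :: rest)) (OFS_R hp) (by omega) m' n' (by omega) (by omega)
      omega

lemma f_cons {a b : ℕ} {rest : List ℕ} (h : OFS (a :: b :: rest)) :
    f (a :: b :: rest) = a + f (R (a :: b :: rest)) := by
  have hlt := maxL_R_lt h
  show a + faux (maxL (a :: b :: rest)) (R (a :: b :: rest)) = _
  rw [faux_congr (maxL (R (a :: b :: rest))) _ (OFS_R h) le_rfl
    (maxL (a :: b :: rest)) (maxL (R (a :: b :: rest)) + 1) hlt (by omega)]
  rfl

lemma maxL_le_f : ∀ k p, OFS p → maxL p ≤ k → maxL p ≤ f p := by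
  intro k
  induction k with
  | zero =>
    intro p hp hk
    omega
  | succ k ih =>
    intro p hp hk
    match p with
    | [] => exact absurd rfl hp.1
    | [x] => show max x 0 ≤ x; omega
    | a :: b :: rest =>
      rw [f_cons hp]
      have h1 := maxL_sub_le hp
      have h2 := maxL_R_lt hp
      have h3 := ih (R (a :: b :: rest)) (OFS_R hp) (by omega)
      omega

lemma OFS_dropLast {p : List ℕ} (hp : OFS p) (hl : 1 < p.length) : OFS p.dropLast := by
  refine ⟨?_, hp.2.1.sublist (List.dropLast_sublist p), fun x hx =>
    hp.2.2 x ((List.dropLast_sublist p).subset hx)⟩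
  have : p.dropLast.length = p.length - 1 := p.length_dropLast
  intro hnil
  rw [hnil] at this
  simp at this
  omega

theorem fw_le_f (p : List ℕ) (hp : OFS p) : fw p ≤ f p := by
  rw [fw]
  split
  · rename_i h
    calc fw p.dropLast ≤ f p.dropLast := fw_le_f p.dropLast (OFS_dropLast hp h.1)
      _ ≤ maxL p := h.2.2
      _ ≤ f p := maxL_le_f (maxL p) p hp le_rfl
  · exact le_rfl
termination_by p.length
decreasing_by
  simp only [List.length_dropLast]
  omega
end

section
/- Let p ∈ OFS with |p| ≥ 2, and let i with 1 ≤ i < |p| satisfy: gcd(p) = gcd(p|_j) for all i ≤ j < |p|, and p_{i+1} ≥ f(p|_i). Then f(p|_j) = p_j for all j with i+1 ≤ j ≤ |p|. -/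
-- Auxiliary lemmas

lemma mem_le_maxL {l : List ℕ} {x : ℕ} (h : x ∈ l) : x ≤ maxL l := by
  induction l with
  | nil => simp at h
  | cons a t ih =>
    rcases List.mem_cons.1 h with rfl | h
    · exact le_max_left _ _
    · exact le_trans (ih h) (le_max_right _ _)

lemma maxL_lt_s8 {l : List ℕ} {c : ℕ} (hc : 0 < c) (h : ∀ x ∈ l, x < c) : maxL l < c := by
  induction l with
  | nil => simpa [maxL]
  | cons a t ih =>
    have := h a (by simp)
    have := ih (fun x hx => h x (by simp [hx]))
    simp only [maxL, List.foldr] at *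
    omega

lemma gcdL_dvd {l : List ℕ} {x : ℕ} (h : x ∈ l) : gcdL l ∣ x := by
  induction l with
  | nil => simp at h
  | cons a t ih =>
    rcases List.mem_cons.1 h with rfl | h
    · exact Nat.gcd_dvd_left _ _
    · exact (Nat.gcd_dvd_right a (gcdL t)).trans (ih h)

lemma dvd_gcdL {l : List ℕ} {d : ℕ} (h : ∀ x ∈ l, d ∣ x) : d ∣ gcdL l := by
  induction l with
  | nil => simp [gcdL]
  | cons a t ih =>
    exact Nat.dvd_gcd (h a (by simp)) (ih (fun x hx => h x (by simp [hx])))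

-- membership in R
lemma mem_R {p : List ℕ} (hl : 1 < p.length) {x : ℕ} :
    x ∈ R p ↔ x = p.headI ∨ ∃ y ∈ p.tail, x = y - p.headI := by
  match p with
  | [] => simp at hl
  | [a] => simp at hl
  | a :: b :: rest =>
    simp only [R]
    rw [(List.mergeSort_perm _ _).mem_iff, List.mem_insert_iff]
    simp only [List.mem_map, List.headI, List.tail]
    constructor
    · rintro (rfl | ⟨y, hy, rfl⟩)
      · exact Or.inl rfl
      · exact Or.inr ⟨y, hy, rfl⟩
    · rintro (rfl | ⟨y, hy, rfl⟩)
      · exact Or.inl rfl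
      · exact Or.inr ⟨y, hy, rfl⟩

lemma sorted_eq_of_mem {l₁ l₂ : List ℕ} (h₁ : l₁.Pairwise (· < ·)) (h₂ : l₂.Pairwise (· < ·))
    (h : ∀ x, x ∈ l₁ ↔ x ∈ l₂) : l₁ = l₂ :=
  List.Perm.eq_of_pairwise' h₁ h₂ ((List.perm_ext_iff_of_nodup h₁.nodup h₂.nodup).2 h)

-- facts about OFS lists
lemma OFS_head_lt {a : ℕ} {t : List ℕ} (h : OFS (a :: t)) {y : ℕ} (hy : y ∈ t) : a < y :=
  (List.pairwise_cons.1 h.2.1).1 y hy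

open List in
lemma mergeSort_sorted_le (l : List ℕ) : (l.mergeSort (· ≤ ·)).Pairwise (· ≤ ·) := by
  have := List.pairwise_mergeSort (le := fun a b : ℕ => a ≤ b)
    (by intro a b c; simp; omega) (by intro a b; simp; omega) l
  simpa using this

lemma R_sorted {p : List ℕ} (hp : p.Pairwise (· < ·)) : (R p).Pairwise (· < ·) := by
  match p with
  | [] => simpa [R]
  | [a] => simp [R]
  | a :: b :: rest =>
    have hs : (R (a :: b :: rest)).Pairwise (· ≤ ·) := mergeSort_sorted_le _
    refine List.Pairwise.imp₂ (fun a b h1 h2 => lt_of_le_of_ne h1 h2) hs ?_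
    refine ((List.mergeSort_perm _ _).nodup_iff).2 ?_
    refine List.Nodup.insert ?_
    refine List.Nodup.map_on ?_ hp.nodup.of_cons
    intro x hx y hy hxy
    have hax : a < x := (List.pairwise_cons.1 hp).1 x hx
    have hay : a < y := (List.pairwise_cons.1 hp).1 y hy
    omega
lemma OFS_R_s8 {p : List ℕ} (hp : OFS p) : OFS (R p) := by
  obtain ⟨hne, hs, hpos⟩ := hp
  match p with
  | [] => exact absurd rfl hne
  | [a] => exact ⟨by simp [R], by simp [R], by simpa [R] using hpos⟩
  | a :: b :: rest =>
    refine ⟨?_, R_sorted hs, ?_⟩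
    · intro h
      have : a ∈ R (a :: b :: rest) := (mem_R (by simp)).2 (Or.inl rfl)
      simp [h] at this
    · intro x hx
      rcases (mem_R (by simp)).1 hx with rfl | ⟨y, hy, rfl⟩
      · exact hpos _ (by simp)
      · have : (a :: b :: rest).headI < y := OFS_head_lt ⟨hne, hs, hpos⟩ hy
        simp only [List.headI] at this ⊢
        omega

lemma maxL_R_lt_s8 {p : List ℕ} (hp : OFS p) (hl : 1 < p.length) : maxL (R p) < maxL p := by
  match p with
  | [] => simp at hl
  | [a] => simp at hl
  | a :: b :: rest =>
    have hb : b ∈ (a :: b :: rest) := by simp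
    have hbm : b ≤ maxL (a :: b :: rest) := mem_le_maxL hb
    have hab : a < b := OFS_head_lt hp (by simp)
    have hb0 : 0 < b := hp.2.2 b hb
    refine maxL_lt_s8 (by omega) ?_
    intro x hx
    rcases (mem_R (by simp)).1 hx with rfl | ⟨y, hy, rfl⟩
    · omega
    · simp only [List.tail_cons] at hy
      have hym : y ≤ maxL (a :: b :: rest) := mem_le_maxL (List.mem_cons_of_mem _ hy)
      have ha0 : 0 < a := hp.2.2 a (by simp)
      have hy0 : 0 < y := hp.2.2 y (by simp [hy])
      simp only [List.headI]
      omega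

lemma faux_stab : ∀ n N₁ N₂ p, OFS p → maxL p < n → maxL p < N₁ → maxL p < N₂ →
    faux N₁ p = faux N₂ p := by
  intro n
  induction n with
  | zero => intro _ _ p _ h; omega
  | succ n ih =>
    intro N₁ N₂ p hp hn h1 h2
    match p with
    | [] => simp [faux]
    | [a] =>
      match N₁, N₂ with
      | 0, 0 => rfl
      | 0, M+1 => rfl
      | M+1, 0 => rfl
      | M+1, K+1 => rfl
    | a :: b :: rest =>
      have hb0 : 0 < b := hp.2.2 b (by simp)
      have hbm : b ≤ maxL (a :: b :: rest) := mem_le_maxL (by simp)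
      match N₁, N₂ with
      | M+1, K+1 =>
        show (a :: b :: rest).headI + faux M (R _) = (a :: b :: rest).headI + faux K (R _)
        have hR : maxL (R (a :: b :: rest)) < maxL (a :: b :: rest) :=
          maxL_R_lt_s8 hp (by simp)
        rw [ih M K _ (OFS_R_s8 hp) (by omega) (by omega) (by omega)]

lemma faux_eq_f {N : ℕ} {p : List ℕ} (hp : OFS p) (hN : maxL p < N) : faux N p = f p :=
  faux_stab (maxL p + 1) N (maxL p + 1) p hp (by omega) hN (by omega)

lemma f_cons_s8 {p : List ℕ} (hp : OFS p) (hl : 1 < p.length) :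
    f p = p.headI + f (R p) := by
  match p with
  | a :: b :: rest =>
    have hb0 : 0 < b := hp.2.2 b (by simp)
    have hbm : b ≤ maxL (a :: b :: rest) := mem_le_maxL (by simp)
    have : f (a :: b :: rest) = (a :: b :: rest).headI + faux (maxL (a :: b :: rest)) (R (a :: b :: rest)) := by
      obtain ⟨M, hM⟩ : ∃ M, maxL (a :: b :: rest) = M + 1 := ⟨maxL (a::b::rest) - 1, by omega⟩
      show faux (maxL (a :: b :: rest) + 1) _ = _
      rw [hM]
      rfl
    rw [this, faux_eq_f (OFS_R_s8 hp) (maxL_R_lt_s8 hp (by simp))]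

lemma f_single (a : ℕ) : f [a] = a := rfl

lemma le_f : ∀ n p, OFS p → maxL p < n → ∀ x ∈ p, x ≤ f p := by
  intro n
  induction n with
  | zero => intro p _ h; omega
  | succ n ih =>
    intro p hp hn x hx
    match p with
    | [] => simp at hx
    | [a] => simp at hx; simp [hx, f_single]
    | a :: b :: rest =>
      rw [f_cons_s8 hp (by simp)]
      rcases List.mem_cons.1 hx with rfl | hx'
      · simp only [List.headI]; omega
      · have hax : a < x := OFS_head_lt hp hx'
        have hxa : x - a ∈ R (a :: b :: rest) :=
          (mem_R (by simp)).2 (Or.inr ⟨x, by simpa using hx', by simp⟩)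
        have := ih (R _) (OFS_R_s8 hp) (by have := maxL_R_lt_s8 hp (by simp); omega) (x - a) hxa
        simp only [List.headI]
        omega

lemma gcdL_R {p : List ℕ} (hp : OFS p) (hl : 1 < p.length) : gcdL (R p) = gcdL p := by
  match p with
  | a :: b :: rest =>
    apply Nat.dvd_antisymm
    · apply dvd_gcdL
      intro x hx
      have hdvd : ∀ y ∈ a :: b :: rest, gcdL (R (a :: b :: rest)) ∣ y := by
        intro y hy
        rcases List.mem_cons.1 hy with rfl | hy'
        · exact gcdL_dvd ((mem_R (by simp)).2 (Or.inl rfl))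
        · have h1 : gcdL (R (a :: b :: rest)) ∣ y - a :=
            gcdL_dvd ((mem_R (by simp)).2 (Or.inr ⟨y, hy', rfl⟩))
          have h2 : gcdL (R (a :: b :: rest)) ∣ a :=
            gcdL_dvd ((mem_R (by simp)).2 (Or.inl rfl))
          have hay : a < y := OFS_head_lt hp hy'
          have := Nat.dvd_add h1 h2
          rwa [Nat.sub_add_cancel (by omega)] at this
      exact hdvd x hx
    · apply dvd_gcdL
      intro x hx
      rcases (mem_R (by simp)).1 hx with rfl | ⟨y, hy, rfl⟩
      · exact gcdL_dvd (by simp)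
      · simp only [List.tail_cons] at hy
        exact Nat.dvd_sub (gcdL_dvd (List.mem_cons_of_mem _ hy)) (gcdL_dvd (by simp))
lemma OFS_append {q : List ℕ} (hq : OFS q) {a : ℕ} (ha : ∀ x ∈ q, x < a) (ha0 : 0 < a) :
    OFS (q ++ [a]) := by
  refine ⟨by simp, ?_, ?_⟩
  · rw [List.pairwise_append]
    exact ⟨hq.2.1, by simp, by simpa using ha⟩
  · intro x hx
    rcases List.mem_append.1 hx with h | h
    · exact hq.2.2 x h
    · simp at h; omega

lemma key : ∀ a q, OFS q → (∀ x ∈ q, x < a) → f q ≤ a → gcdL q ∣ a → f (q ++ [a]) = a := by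
  intro a
  induction a using Nat.strong_induction_on with
  | _ a IH =>
  intro q hq ha hfa hda
  obtain ⟨c, t, rfl⟩ : ∃ c t, q = c :: t := by
    rcases q with _ | ⟨c, t⟩
    · exact absurd rfl hq.1
    · exact ⟨c, t, rfl⟩
  have hc0 : 0 < c := hq.2.2 c (by simp)
  have hca : c < a := ha c (by simp)
  have hOFSqa : OFS ((c :: t) ++ [a]) := OFS_append hq ha (by omega)
  have hlen : 1 < ((c :: t) ++ [a]).length := by simp
  have hfc : f ((c :: t) ++ [a]) = c + f (R ((c :: t) ++ [a])) := f_cons_s8 hOFSqa hlen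
  have memR2 : ∀ x, x ∈ R ((c :: t) ++ [a]) ↔ (x = c ∨ ∃ y ∈ t, x = y - c) ∨ x = a - c := by
    intro x
    rw [mem_R hlen]
    simp only [List.cons_append, List.headI_cons, List.tail_cons, List.mem_append,
      List.mem_singleton]
    constructor
    · rintro (rfl | ⟨y, hy | rfl, rfl⟩)
      · exact Or.inl (Or.inl rfl)
      · exact Or.inl (Or.inr ⟨y, hy, rfl⟩)
      · exact Or.inr rfl
    · rintro ((rfl | ⟨y, hy, rfl⟩) | rfl)
      · exact Or.inl rfl
      · exact Or.inr ⟨y, Or.inl hy, rfl⟩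
      · exact Or.inr ⟨a, Or.inr rfl, rfl⟩
  match t with
  | [] =>
    have hdc : c ∣ a := by simpa [gcdL] using hda
    have h2c : 2 * c ≤ a := by
      obtain ⟨k, rfl⟩ := hdc
      match k with
      | 0 => omega
      | 1 => omega
      | k+2 =>
        have := Nat.mul_le_mul_left c (show 2 ≤ k+2 by omega)
        omega
    by_cases hca2 : a = 2 * c
    · have hR : R ([c] ++ [a]) = [c] := by
        refine sorted_eq_of_mem (R_sorted hOFSqa.2.1) (by simp) ?_
        intro x
        rw [memR2]
        simp only [List.mem_singleton]
        constructor
        · rintro ((rfl | ⟨y, hy, rfl⟩) | rfl)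
          · rfl
          · simp at hy
          · omega
        · rintro rfl; exact Or.inl (Or.inl rfl)
      rw [hfc, hR, f_single]; omega
    · have hR : R ([c] ++ [a]) = [c] ++ [a - c] := by
        refine sorted_eq_of_mem (R_sorted hOFSqa.2.1) ?_ ?_
        · simp; omega
        · intro x
          rw [memR2]
          simp only [List.cons_append, List.mem_cons, List.not_mem_nil, or_false,
            List.nil_append, List.mem_singleton]
          constructor
          · rintro ((rfl | ⟨y, hy, rfl⟩) | rfl)
            · exact Or.inl rfl
            · simp at hy
            · exact Or.inr rfl
          · rintro (rfl | rfl)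
            · exact Or.inl (Or.inl rfl)
            · exact Or.inr rfl
      rw [hfc, hR, IH (a - c) (by omega) [c] ⟨by simp, by simp, by simpa using hc0⟩
        (by intro x hx; simp at hx; omega) (by rw [f_single]; omega)
        (by simpa [gcdL] using Nat.dvd_sub hdc (dvd_refl c))]
      omega
  | b :: t' =>
    set r := R (c :: b :: t') with hrdef
    have hr : OFS r := OFS_R_s8 hq
    have fq : f (c :: b :: t') = c + f r := f_cons_s8 hq (by simp)
    have hgr : gcdL r = gcdL (c :: b :: t') := gcdL_R hq (by simp)
    have memr : ∀ x, x ∈ r ↔ x = c ∨ ∃ y ∈ b :: t', x = y - c := by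
      intro x
      rw [hrdef, mem_R (by simp)]
      simp
    have hcr : c ∈ r := (memr c).2 (Or.inl rfl)
    have hfr_ge : ∀ x ∈ r, x ≤ f r := le_f (maxL r + 1) r hr (by omega)
    have hcfr : c ≤ f r := hfr_ge c hcr
    have hfa' : c + f r ≤ a := by rw [← fq]; exact hfa
    by_cases hac : a - c ∈ r
    · have hR : R ((c :: b :: t') ++ [a]) = r := by
        refine sorted_eq_of_mem (R_sorted hOFSqa.2.1) hr.2.1 ?_
        intro x
        rw [memR2 x, ← memr x]
        constructor
        · rintro (h | rfl)
          · exact h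
          · exact hac
        · exact Or.inl
      have h1 : a - c ≤ f r := hfr_ge _ hac
      rw [hfc, hR]
      omega
    · have hlt : ∀ x ∈ r, x < a - c := by
        intro x hx
        have hne : x ≠ a - c := fun h => hac (h ▸ hx)
        rcases (memr x).1 hx with rfl | ⟨y, hy, rfl⟩
        · omega
        · have hcy : c < y := OFS_head_lt hq hy
          have hya : y < a := ha y (List.mem_cons_of_mem _ hy)
          omega
      have hR : R ((c :: b :: t') ++ [a]) = r ++ [a - c] := by
        refine sorted_eq_of_mem (R_sorted hOFSqa.2.1) ?_ ?_
        · rw [List.pairwise_append]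
          exact ⟨hr.2.1, by simp, by simpa using hlt⟩
        · intro x
          rw [memR2 x, ← memr x]
          simp [List.mem_append]
      have hd' : gcdL r ∣ a - c := by
        rw [hgr]
        exact Nat.dvd_sub hda (gcdL_dvd (by simp))
      rw [hfc, hR, IH (a - c) (by omega) r hr hlt (by omega) hd']
      omega
lemma step_lemma {p : List ℕ} (hp : OFS p) {j : ℕ} (hj1 : 1 ≤ j) (hj : j < p.length)
    (hfj : f (p.take j) ≤ p.getD j 0) (hd : gcdL (p.take j) ∣ p.getD j 0) :
    f (p.take (j+1)) = p.getD j 0 := by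
  have htake : p.take (j+1) = p.take j ++ [p.getD j 0] := by
    rw [List.take_succ, List.getElem?_eq_getElem hj, List.getD_eq_getElem _ _ hj]
    rfl
  have hOFSt : OFS (p.take j) := by
    refine ⟨?_, ?_, ?_⟩
    · apply List.ne_nil_of_length_pos
      rw [List.length_take]
      omega
    · exact List.Pairwise.sublist (List.take_sublist _ _) hp.2.1
    · intro x hx
      exact hp.2.2 x (List.take_subset _ _ hx)
  have hlt : ∀ x ∈ p.take j, x < p.getD j 0 := by
    have hs : (p.take (j+1)).Pairwise (· < ·) :=
      List.Pairwise.sublist (List.take_sublist _ _) hp.2.1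
    rw [htake, List.pairwise_append] at hs
    intro x hx
    exact hs.2.2 x hx _ (by simp)
  rw [htake]
  exact key _ _ hOFSt hlt hfj hd


theorem ready_for_optimality (p : List ℕ) (hp : OFS p) (h2 : 2 ≤ p.length)
    (i : ℕ) (hi1 : 1 ≤ i) (hi2 : i < p.length)
    (hg : ∀ j : ℕ, i ≤ j → j < p.length → gcdL (p.take j) = gcdL p)
    (hf : f (p.take i) ≤ p.getD i 0) :
    ∀ j : ℕ, i + 1 ≤ j → j ≤ p.length → f (p.take j) = p.getD (j - 1) 0 := by
  have hgd : ∀ j, i ≤ j → j < p.length → gcdL (p.take j) ∣ p.getD j 0 := by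
    intro j h1 h2'
    rw [hg j h1 h2', List.getD_eq_getElem _ _ h2']
    exact gcdL_dvd (List.getElem_mem _)
  intro j hj1 hj2
  induction j, hj1 using Nat.le_induction with
  | base =>
    have := step_lemma hp hi1 hi2 hf (hgd i le_rfl hi2)
    simpa using this
  | succ j hj ih =>
    have hjlen : j < p.length := by omega
    have hj1' : 1 ≤ j := by omega
    have hmono : p.getD (j-1) 0 < p.getD j 0 := by
      rw [List.getD_eq_getElem _ _ hjlen, List.getD_eq_getElem _ _ (by omega : j - 1 < p.length)]
      have := List.pairwise_iff_get.1 hp.2.1 _ _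
        (show (⟨j-1, by omega⟩ : Fin p.length) < ⟨j, hjlen⟩ by
          simp [Fin.lt_def]; omega)
      simpa [List.get_eq_getElem] using this
    have hfj : f (p.take j) ≤ p.getD j 0 := by
      rw [ih (by omega)]
      omega
    have := step_lemma hp hj1' hjlen hfj (hgd j (by omega) hjlen)
    simpa using this
end
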